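/- Let R ∈ ℤ^m and S ∈ ℤ^n be nonnegative integer vectors with equal component sums, every component of R at most n and every component of S at most m. There exists an m×n (0,1)-matrix A with row sum vector R and column sum vector S invariant under both r_0 and r_∞ if and only if all of the following hold: (a) S is palindromic and R is palindromic; (b) if n is even then every component of R is even, if n is odd then s_⌈n/2⌉ ≥ o(R), if m is even then every component of S is even, and if m is odd then r_⌈m/2⌉ ≥ o(S); (c) if n is odd then o(R) = s_⌈n/2⌉ and if m is odd then o(S) = r_⌈m/2⌉; and (d) S̆ ⪯ R̆*, where R̆ = (⌊r_1/2⌋, ⌊r_2/2⌋, …, ⌊r_⌊m/2⌋/2⌋) and S̆ = (⌊s_1/2⌋, ⌊s_2/2⌋, …, ⌊s_⌊n/2⌋/2⌋). -/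

import Mathlib

/-- The multiset of components of a vector. -/
def vecMS {n : ℕ} (v : Fin n → ℕ) : Multiset ℕ := Multiset.map v Finset.univ.val

/-- The sum of the `k` largest elements of a multiset of natural numbers. -/
def topSum (M : Multiset ℕ) (k : ℕ) : ℕ := ((M.sort (· ≤ ·)).reverse.take k).sum

/-- `MajorizedBy S R` means `S ⪯ R`: the component sums agree and every
partial sum of the weakly decreasing rearrangement of `R` dominates the
corresponding partial sum for `S`. -/
def MajorizedBy (S R : Multiset ℕ) : Prop := S.sum = R.sum ∧ ∀ k, topSum S k ≤ topSum R k

/-- The conjugate `R*` of (the weakly decreasing rearrangement of) `R`,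
viewed as an integer partition. -/
def conjMS (M : Multiset ℕ) : Multiset ℕ :=
  (Multiset.range M.sum).map fun j => (M.filter (fun x => j + 1 ≤ x)).card


/-!
A matrix fixed by both reflections is determined by its top-left `⌊m/2⌋ × ⌊n/2⌋` quarter `B`,
its middle column (when `n` is odd) and its middle row (when `m` is odd). A row sum in the top
half is then twice a row sum of `B` plus a middle entry, which gives the palindromy and parity
conditions and shows that `B` is a (0,1)-matrix with row sums `R̆` and column sums `S̆`; by the
Gale–Ryser theorem such a `B` exists iff `S̆ ⪯ R̆*`. Conversely, reflect a Gale–Ryser matrix `B` into the four corners and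
fill the middle column with `r_i mod 2` and the middle row with `s_j mod 2`: the conditions
`o(S) = r_⌈m/2⌉` and `o(R) = s_⌈n/2⌉` make the middle sums right, and they also force
`r_⌈m/2⌉ ≡ s_⌈n/2⌉ (mod 2)`, so the centre entry is well defined.

Gale–Ryser is proved in the form `∑_{j ∈ K} s_j ≤ ∑_i min(r_i, |K|)` for every set `K` of
columns, by Ryser's induction: the ones of a column go into the rows with the largest sums.
-/

open Finset
open scoped Matrix

theorem List.sum_take_le_of_sublist {l₁ l : List ℕ} (hl : l.Pairwise (· ≥ ·))
    (h : l₁.Sublist l) (k : ℕ) : (l₁.take k).sum ≤ (l.take k).sum := by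
  induction h generalizing k with
  | slnil => rfl
  | @cons l₁ l a h ih =>
    obtain _ | k := k
    · simp
    have hla : ∀ x ∈ l, x ≤ a := fun x hx => List.rel_of_pairwise_cons hl hx
    have hnext : (l.take (k + 1)).sum ≤ (l.take k).sum + a := by
      rw [List.take_add_one, List.sum_append]
      cases hk : l[k]? with
      | none => simp
      | some x => simpa using hla x (List.mem_of_getElem? hk)
    calc (l₁.take (k + 1)).sum ≤ (l.take (k + 1)).sum := ih hl.of_cons (k + 1)
      _ ≤ ((a :: l).take (k + 1)).sum := by simp only [List.take_succ_cons, List.sum_cons]; omega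
  | @cons_cons l₁ l a h ih =>
    obtain _ | k := k
    · simp
    simpa using ih hl.of_cons k

theorem sum_le_topSum {N M : Multiset ℕ} (hNM : N ≤ M) {k : ℕ} (hk : N.card ≤ k) :
    N.sum ≤ topSum M k := by
  set l := (M.sort (· ≤ ·)).reverse
  have hl : (l : Multiset ℕ) = M := by rw [Multiset.coe_reverse, Multiset.sort_eq]
  obtain ⟨l₁, hperm, hsub⟩ : N.toList.Subperm l :=
    Multiset.coe_le.1 (by rwa [Multiset.coe_toList, hl])
  have hlen : l₁.length ≤ k := by rwa [hperm.length_eq, Multiset.length_toList]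
  calc N.sum = (l₁.take k).sum := by
        rw [List.take_of_length_le hlen, hperm.sum_eq, Multiset.sum_toList]
    _ ≤ (l.take k).sum :=
        List.sum_take_le_of_sublist (List.pairwise_reverse.2 (M.pairwise_sort _)) hsub k

theorem exists_le_sum_eq_topSum (M : Multiset ℕ) (k : ℕ) :
    ∃ N ≤ M, N.card ≤ k ∧ N.sum = topSum M k := by
  refine ⟨((M.sort (· ≤ ·)).reverse.take k : List ℕ), ?_, by simp, by simp [topSum]⟩
  calc (((M.sort (· ≤ ·)).reverse.take k : List ℕ) : Multiset ℕ)
      ≤ ((M.sort (· ≤ ·)).reverse : List ℕ) :=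
        Multiset.coe_le.2 (List.take_sublist _ _).subperm
    _ = M := by rw [Multiset.coe_reverse, Multiset.sort_eq]

theorem topSum_coe_of_pairwise {l : List ℕ} (hl : l.Pairwise (· ≥ ·)) (k : ℕ) :
    topSum l k = (l.take k).sum := by
  rw [topSum, ← Multiset.coe_reverse, Multiset.coe_sort,
    List.mergeSort_eq_self _ (List.pairwise_reverse.2 hl), List.reverse_reverse]

theorem Multiset.exists_le_map_eq {α β : Type*} {f : α → β} {N : Multiset β} {u : Multiset α}
    (h : N ≤ u.map f) : ∃ v ≤ u, v.map f = N := by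
  induction u using Quotient.inductionOn with | h l => ?_
  induction N using Quotient.inductionOn with | h l₁ => ?_
  obtain ⟨l₂, hperm, hsub⟩ := Multiset.coe_le.1 h
  obtain ⟨l', hl', rfl⟩ := List.sublist_map_iff.1 hsub
  exact ⟨l', Multiset.coe_le.2 hl'.subperm, Multiset.coe_eq_coe.2 hperm⟩

theorem sum_le_topSum_vecMS {q : ℕ} (s : Fin q → ℕ) (K : Finset (Fin q)) :
    ∑ j ∈ K, s j ≤ topSum (vecMS s) #K :=
  sum_le_topSum (Multiset.map_le_map (Finset.val_le_iff.2 (subset_univ K))) (by simp)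

theorem exists_finset_sum_eq_topSum_vecMS {q : ℕ} (s : Fin q → ℕ) (k : ℕ) :
    ∃ K : Finset (Fin q), #K ≤ k ∧ ∑ j ∈ K, s j = topSum (vecMS s) k := by
  obtain ⟨N, hN, hcard, hsum⟩ := exists_le_sum_eq_topSum (vecMS s) k
  obtain ⟨u, hu, rfl⟩ := Multiset.exists_le_map_eq hN
  exact ⟨⟨u, Multiset.nodup_of_le hu univ.nodup⟩, by simpa using hcard, hsum⟩

theorem sum_range_card_filter (M : Multiset ℕ) (t : ℕ) :
    ∑ j ∈ range t, (M.filter fun x => j + 1 ≤ x).card = (M.map (min · t)).sum := by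
  induction M using Multiset.induction_on with
  | empty => simp
  | cons a M ih =>
    have hmin : ∑ j ∈ range t, (if j + 1 ≤ a then 1 else 0) = min a t := by
      clear ih
      induction t with
      | zero => simp
      | succ t iht => rw [sum_range_succ, iht]; split_ifs <;> omega
    simp only [Multiset.filter_cons, Multiset.card_add, apply_ite Multiset.card,
      Multiset.card_singleton, Multiset.card_zero, sum_add_distrib, hmin, ih, Multiset.map_cons,
      Multiset.sum_cons]

theorem topSum_conjMS (M : Multiset ℕ) (k : ℕ) : topSum (conjMS M) k = (M.map (min · k)).sum := by
  set g : ℕ → ℕ := fun j => (M.filter fun x => j + 1 ≤ x).card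
  have hanti : ((List.range M.sum).map g).Pairwise (· ≥ ·) :=
    List.pairwise_map.2 <| List.pairwise_lt_range.imp fun hab =>
      Multiset.card_le_card (Multiset.monotone_filter_right M fun x hx => by omega)
  rw [conjMS, ← Multiset.coe_range, Multiset.map_coe, topSum_coe_of_pairwise hanti,
    ← List.map_take, List.take_range, ← Multiset.sum_coe, ← Multiset.map_coe, Multiset.coe_range]
  refine (sum_range_card_filter M _).trans (congrArg _ (Multiset.map_congr rfl fun x hx => ?_))
  have := Multiset.le_sum_of_mem hx
  omega

theorem sum_conjMS (M : Multiset ℕ) : (conjMS M).sum = M.sum := by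
  refine (sum_range_card_filter M M.sum).trans ?_
  conv_rhs => rw [← Multiset.map_id M]
  exact congrArg _ (Multiset.map_congr rfl fun x hx => min_eq_left (Multiset.le_sum_of_mem hx))

theorem majorizedBy_conjMS_vecMS_iff {p q : ℕ} (r : Fin p → ℕ) (s : Fin q → ℕ) :
    MajorizedBy (vecMS s) (conjMS (vecMS r)) ↔
      ∑ j, s j = ∑ i, r i ∧ ∀ K : Finset (Fin q), ∑ j ∈ K, s j ≤ ∑ i, min (r i) #K := by
  have hmin (k : ℕ) : ((vecMS r).map (min · k)).sum = ∑ i, min (r i) k := by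
    rw [vecMS, Multiset.map_map]; rfl
  simp only [MajorizedBy, sum_conjMS, topSum_conjMS, hmin]
  refine and_congr Iff.rfl ⟨fun h K => (sum_le_topSum_vecMS s K).trans (h #K), fun h k => ?_⟩
  obtain ⟨K, hK, hsum⟩ := exists_finset_sum_eq_topSum_vecMS s k
  rw [← hsum]
  exact (h K).trans (sum_le_sum fun i _ => min_le_min_left _ hK)

def IsTopSet {ι α : Type*} [LE α] (r : ι → α) (T : Finset ι) : Prop :=
  ∀ i ∈ T, ∀ i' ∉ T, r i' ≤ r i

theorem exists_isTopSet_card_eq {ι α : Type*} [Fintype ι] [DecidableEq ι] [LinearOrder α]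
    (r : ι → α) {c : ℕ} (hc : c ≤ Fintype.card ι) : ∃ T, IsTopSet r T ∧ #T = c := by
  induction c with
  | zero => exact ⟨∅, by simp [IsTopSet], rfl⟩
  | succ c ih =>
    obtain ⟨T, hT, hcard⟩ := ih (by omega)
    have hne : Tᶜ.Nonempty := by
      rw [← card_pos, card_compl, hcard]
      omega
    obtain ⟨i₀, hi₀, hmax⟩ := exists_max_image Tᶜ r hne
    have hi₀T : i₀ ∉ T := mem_compl.1 hi₀
    refine ⟨insert i₀ T, fun i hi i' hi' => ?_, by rw [card_insert_of_notMem hi₀T, hcard]⟩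
    have hi'T : i' ∉ T := fun h => hi' (mem_insert_of_mem h)
    rcases mem_insert.1 hi with rfl | hiT
    · exact hmax i' (mem_compl.2 hi'T)
    · exact hT i hiT i' hi'T

theorem IsTopSet.le_imp_mem_or_forall_le {ι α : Type*} [LinearOrder α] {r : ι → α}
    {T : Finset ι} (hT : IsTopSet r T) (a : α) :
    (∀ i, a ≤ r i → i ∈ T) ∨ ∀ i ∈ T, a ≤ r i := by
  by_contra! h
  obtain ⟨⟨i', hi', hi'T⟩, i, hiT, hi⟩ := h
  exact absurd (hT i hiT i' hi'T) (not_le.2 (hi.trans_le hi'))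

theorem sum_min_succ {ι : Type*} [Fintype ι] (r : ι → ℕ) (k : ℕ) :
    ∑ i, min (r i) (k + 1) = ∑ i, min (r i) k + #{i | k < r i} := by
  rw [card_filter, ← sum_add_distrib]
  exact sum_congr rfl fun i _ => by split_ifs <;> omega

theorem le_sum_min_sub_of_isTopSet {ι : Type*} [Fintype ι] [DecidableEq ι] {r : ι → ℕ}
    {T : Finset ι} (hT : IsTopSet r T) (hpos : ∀ i ∈ T, 0 < r i) {x k : ℕ}
    (h₁ : x ≤ ∑ i, min (r i) k) (h₂ : x + #T ≤ ∑ i, min (r i) (k + 1)) :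
    x ≤ ∑ i, min (r i - if i ∈ T then 1 else 0) k := by
  -- Either every row outside `T` has sum at most `k`, and `h₂` is the bound needed, or every row
  -- of `T` exceeds `k`, and removing one unit from it does not change `min · k`.
  rcases hT.le_imp_mem_or_forall_le (k + 1) with hout | hin
  · have hsplit : ∑ i, min (r i) (k + 1)
        = ∑ i, min (r i - if i ∈ T then 1 else 0) k + ∑ i, if i ∈ T then 1 else 0 := by
      rw [← sum_add_distrib]
      refine sum_congr rfl fun i _ => ?_
      by_cases hi : i ∈ T
      · simp only [hi, if_true]; have := hpos i hi; omega
      · simp only [hi, if_false]; have := mt (hout i) hi; omega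
    simp only [sum_boole, Nat.cast_id, filter_mem_eq_inter, univ_inter] at hsplit
    omega
  · refine h₁.trans_eq (sum_congr rfl fun i _ => ?_)
    by_cases hi : i ∈ T
    · simp only [hi, if_true]; have := hin i hi; omega
    · simp only [hi, if_false, Nat.sub_zero]

theorem IsTopSet.pos_of_card_le {ι : Type*} [Fintype ι] [DecidableEq ι] {r : ι → ℕ}
    {T : Finset ι} (hT : IsTopSet r T) (hcard : #T ≤ #{i | 0 < r i}) : ∀ i ∈ T, 0 < r i := by
  rcases hT.le_imp_mem_or_forall_le 1 with hsub | hge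
  · have hT_eq : ({i | 0 < r i} : Finset ι) = T :=
      eq_of_subset_of_card_le (fun i hi => hsub i (mem_filter.1 hi).2) hcard
    intro i hi
    rw [← hT_eq, mem_filter] at hi
    exact hi.2
  · exact hge

theorem exists_zeroOne_matrix_of_dominance {p : ℕ} : ∀ {q : ℕ} (r : Fin p → ℕ) (s : Fin q → ℕ),
    ∑ j, s j = ∑ i, r i → (∀ K : Finset (Fin q), ∑ j ∈ K, s j ≤ ∑ i, min (r i) #K) →
    ∃ B : Matrix (Fin p) (Fin q) ℕ,
      (∀ i j, B i j = 0 ∨ B i j = 1) ∧ (∀ i, ∑ j, B i j = r i) ∧ ∀ j, ∑ i, B i j = s j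
  | 0, r, s, hsum, _ => by
    have hr (i : Fin p) : r i = 0 :=
      sum_eq_zero_iff.1 (hsum.symm.trans (by simp)) i (mem_univ i)
    exact ⟨0, fun _ _ => Or.inl rfl, fun i => by simp [hr], finZeroElim⟩
  | q + 1, r, s, hsum, hdom => by
    have hs₀ : s 0 ≤ #{i | 0 < r i} := by simpa [sum_min_succ r 0] using hdom {0}
    obtain ⟨T, hT, hTcard⟩ :=
      exists_isTopSet_card_eq r ((hs₀.trans (card_filter_le _ _)).trans_eq card_univ)
    have hpos := hT.pos_of_card_le (hTcard ▸ hs₀)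
    -- column `0` gets its ones in the rows of `T`
    set t : Fin p → ℕ := fun i => if i ∈ T then 1 else 0
    have hrt (i : Fin p) : r i - t i + t i = r i := by
      by_cases hi : i ∈ T
      · simp only [t, hi, if_true]; have := hpos i hi; omega
      · simp only [t, hi, if_false]; omega
    have ht : ∑ i, t i = s 0 := by simp [t, hTcard]
    have hsum' : ∑ j, Fin.tail s j = ∑ i, (r i - t i) := by
      have hsplit := sum_add_distrib (s := univ) (f := fun i => r i - t i) (g := t)
      simp only [hrt] at hsplit
      rw [Fin.sum_univ_succ] at hsum
      simp only [Fin.tail]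
      omega
    have hdom' (K : Finset (Fin q)) : ∑ j ∈ K, Fin.tail s j ≤ ∑ i, min (r i - t i) #K := by
      change ∑ j ∈ K, s (Fin.succEmb q j) ≤ _
      have h₁ := hdom (K.map (Fin.succEmb q))
      have h₂ := hdom (cons 0 (K.map (Fin.succEmb q)) (by simp))
      rw [sum_map, card_map] at h₁
      rw [sum_cons, sum_map, card_cons, card_map] at h₂
      exact le_sum_min_sub_of_isTopSet hT hpos h₁ (by rw [hTcard]; omega)
    obtain ⟨B, h01, hrow, hcol⟩ := exists_zeroOne_matrix_of_dominance _ _ hsum' hdom'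
    refine ⟨fun i => Fin.cons (t i) (B i), fun i j => ?_, fun i => ?_, fun j => ?_⟩
    · cases j using Fin.cases
      · simp only [Fin.cons_zero, t]; split_ifs <;> simp
      · exact h01 i _
    · rw [Fin.sum_cons, hrow, add_comm, hrt]
    · cases j using Fin.cases
      · simpa using ht
      · simpa [Fin.tail] using hcol _

theorem sum_le_sum_min_of_zeroOne {ι κ : Type*} [Fintype ι] [Fintype κ] {B : Matrix ι κ ℕ}
    {r : ι → ℕ} {s : κ → ℕ} (h01 : ∀ i j, B i j = 0 ∨ B i j = 1)
    (hrow : ∀ i, ∑ j, B i j = r i) (hcol : ∀ j, ∑ i, B i j = s j) (K : Finset κ) :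
    ∑ j ∈ K, s j ≤ ∑ i, min (r i) #K := by
  simp only [← hcol, ← hrow]
  rw [sum_comm]
  refine sum_le_sum fun i _ => le_min (sum_le_sum_of_subset (subset_univ K)) ?_
  calc ∑ j ∈ K, B i j ≤ ∑ _j ∈ K, 1 := sum_le_sum fun j _ => by rcases h01 i j with h | h <;> omega
    _ = #K := by simp

theorem gale_ryser {p q : ℕ} (r : Fin p → ℕ) (s : Fin q → ℕ) :
    MajorizedBy (vecMS s) (conjMS (vecMS r)) ↔ ∃ B : Matrix (Fin p) (Fin q) ℕ,
      (∀ i j, B i j = 0 ∨ B i j = 1) ∧ (∀ i, ∑ j, B i j = r i) ∧ ∀ j, ∑ i, B i j = s j := by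
  rw [majorizedBy_conjMS_vecMS_iff]
  refine ⟨fun ⟨hsum, hdom⟩ => exists_zeroOne_matrix_of_dominance r s hsum hdom, ?_⟩
  rintro ⟨B, h01, hrow, hcol⟩
  refine ⟨?_, sum_le_sum_min_of_zeroOne h01 hrow hcol⟩
  simp only [← hrow, ← hcol]
  exact sum_comm

/-- Identifies the mirror positions `a` and `m - 1 - a` of a vector of length `m`; the value is
below `m / 2` except at the middle position of an odd `m`. -/
def foldIndex (m a : ℕ) : ℕ := min a (m - 1 - a)

section Fold

variable {m : ℕ}

theorem half_lt_of_mod_two_eq_one (hm : m % 2 = 1) : m / 2 < m := by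
  omega

theorem foldIndex_rev (i : Fin m) : foldIndex m i.rev = foldIndex m i := by
  simp only [foldIndex, Fin.val_rev]
  omega

theorem foldIndex_lt (i : Fin m) : foldIndex m i < m := by
  have := i.isLt
  unfold foldIndex
  omega

theorem eq_half_of_half_le_foldIndex {i : Fin m} (h : m / 2 ≤ foldIndex m i) :
    m % 2 = 1 ∧ (i : ℕ) = m / 2 := by
  have := i.isLt
  unfold foldIndex at h
  omega

theorem apply_foldIndex {α : Type*} {v : Fin m → α} (hv : ∀ i, v i = v i.rev) (i : Fin m) :
    v ⟨foldIndex m i, foldIndex_lt i⟩ = v i := by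
  rcases le_total (i : ℕ) (m - 1 - i) with h | h
  · congr 1
    ext
    simp only [foldIndex]
    omega
  · rw [hv i]
    congr 1
    ext
    simp only [foldIndex, Fin.val_rev]
    omega

theorem sum_comp_foldIndex {M : Type*} [AddCommMonoid M] (g : ℕ → M) :
    ∑ i : Fin m, g (foldIndex m i) = 2 • ∑ a ∈ range (m / 2), g a + (m % 2) • g (m / 2) := by
  rw [Fin.sum_univ_eq_sum_range (fun a => g (foldIndex m a))]
  obtain ⟨k, rfl | rfl⟩ := Nat.even_or_odd' m
  · have hlow : ∀ a ∈ range k, g (foldIndex (2 * k) a) = g a := fun a ha => by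
      rw [mem_range] at ha; congr 1; unfold foldIndex; omega
    have hhigh : ∀ a ∈ range k, g (foldIndex (2 * k) (k + a)) = g (k - 1 - a) := fun a ha => by
      rw [mem_range] at ha; congr 1; unfold foldIndex; omega
    rw [show 2 * k = k + k by ring, sum_range_add, ← show 2 * k = k + k by ring,
      sum_congr rfl hlow, sum_congr rfl hhigh, sum_range_reflect]
    simp [two_smul]
  · have hlow : ∀ a ∈ range k, g (foldIndex (2 * k + 1) a) = g a := fun a ha => by
      rw [mem_range] at ha; congr 1; unfold foldIndex; omega
    have hhigh : ∀ a ∈ range k, g (foldIndex (2 * k + 1) (k + (a + 1))) = g (k - 1 - a) :=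
      fun a ha => by rw [mem_range] at ha; congr 1; unfold foldIndex; omega
    have hmid : foldIndex (2 * k + 1) (k + 0) = k := by unfold foldIndex; omega
    rw [show 2 * k + 1 = k + (k + 1) by ring, sum_range_add, sum_range_succ',
      ← show 2 * k + 1 = k + (k + 1) by ring, sum_congr rfl hlow, sum_congr rfl hhigh,
      sum_range_reflect, hmid]
    simp only [show (2 * k + 1) / 2 = k by omega, show (2 * k + 1) % 2 = 1 by omega, one_smul,
      two_smul, add_assoc]

theorem sum_eq_of_palindrome {M : Type*} [AddCommMonoid M] {v : Fin m → M}
    (hv : ∀ i, v i = v i.rev) :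
    ∑ i, v i = 2 • ∑ i : Fin (m / 2), v (i.castLE (Nat.div_le_self m 2))
      + (m % 2) • Function.extend Fin.val v 0 (m / 2) := by
  have hext (i : Fin m) : Function.extend Fin.val v 0 i = v i :=
    Fin.val_injective.extend_apply v 0 i
  calc ∑ i, v i = ∑ i : Fin m, Function.extend Fin.val v 0 (foldIndex m i) :=
        sum_congr rfl fun i _ => by rw [← apply_foldIndex hv i]; exact (hext _).symm
    _ = _ := by
        rw [sum_comp_foldIndex, sum_range]
        congr 2
        exact sum_congr rfl fun i _ => hext (i.castLE _)

theorem sum_eq_of_palindrome_of_even {M : Type*} [AddCommMonoid M] {v : Fin m → M}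
    (hv : ∀ i, v i = v i.rev) (hm : m % 2 = 0) :
    ∑ i, v i = 2 • ∑ i : Fin (m / 2), v (i.castLE (Nat.div_le_self m 2)) := by
  simpa [hm] using sum_eq_of_palindrome hv

theorem sum_eq_of_palindrome_of_odd {M : Type*} [AddCommMonoid M] {v : Fin m → M}
    (hv : ∀ i, v i = v i.rev) (hm : m % 2 = 1) :
    ∑ i, v i = 2 • ∑ i : Fin (m / 2), v (i.castLE (Nat.div_le_self m 2))
      + v ⟨m / 2, half_lt_of_mod_two_eq_one hm⟩ := by
  rw [sum_eq_of_palindrome hv, hm, one_smul]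
  exact congrArg _ (Fin.val_injective.extend_apply v 0 ⟨m / 2, half_lt_of_mod_two_eq_one hm⟩)

end Fold

theorem card_filter_mod_two_eq_one {ι : Type*} [Fintype ι] (v : ι → ℕ) :
    #{i | v i % 2 = 1} = ∑ i, v i % 2 := by
  rw [card_filter]
  exact sum_congr rfl fun i _ => by split_ifs <;> omega

section Palindrome

variable {m : ℕ} {v : Fin m → ℕ}

theorem sum_mod_two_of_palindrome_of_even (hv : ∀ i, v i = v i.rev) (hm : m % 2 = 0) :
    (∑ i, v i) % 2 = 0 := by
  rw [sum_eq_of_palindrome_of_even hv hm, smul_eq_mul, Nat.mul_mod_right]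

theorem sum_mod_two_of_palindrome_of_odd (hv : ∀ i, v i = v i.rev) (hv₁ : ∀ i, v i ≤ 1)
    (hm : m % 2 = 1) : (∑ i, v i) % 2 = v ⟨m / 2, half_lt_of_mod_two_eq_one hm⟩ := by
  rw [sum_eq_of_palindrome_of_odd hv hm, smul_eq_mul]
  have := hv₁ ⟨m / 2, half_lt_of_mod_two_eq_one hm⟩
  omega

theorem sum_div_two_of_palindrome (hv : ∀ i, v i = v i.rev) (hv₁ : ∀ i, v i ≤ 1) :
    (∑ i, v i) / 2 = ∑ i : Fin (m / 2), v (i.castLE (Nat.div_le_self m 2)) := by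
  rcases Nat.mod_two_eq_zero_or_one m with hm | hm
  · rw [sum_eq_of_palindrome_of_even hv hm, smul_eq_mul]
    omega
  · rw [sum_eq_of_palindrome_of_odd hv hm, smul_eq_mul]
    have := hv₁ ⟨m / 2, half_lt_of_mod_two_eq_one hm⟩
    omega

theorem card_filter_mod_two_mod_two_of_palindrome (hv : ∀ i, v i = v i.rev) (hm : m % 2 = 1) :
    #{i | v i % 2 = 1} % 2 = v ⟨m / 2, half_lt_of_mod_two_eq_one hm⟩ % 2 := by
  rw [card_filter_mod_two_eq_one]
  exact sum_mod_two_of_palindrome_of_odd (fun i => congrArg (· % 2) (hv i)) (fun i => by omega) hm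

end Palindrome

theorem card_filter_rowSum_odd {m n : ℕ} {A : Matrix (Fin m) (Fin n) ℕ} (hA : ∀ i j, A i j ≤ 1)
    (hrev : ∀ i j, A i j = A i j.rev) (hn : n % 2 = 1) :
    #{i | (∑ j, A i j) % 2 = 1} = ∑ i, A i ⟨n / 2, half_lt_of_mod_two_eq_one hn⟩ := by
  rw [card_filter_mod_two_eq_one]
  exact sum_congr rfl fun i _ => sum_mod_two_of_palindrome_of_odd (hrev i) (hA i) hn

/-- The quarter `B` reflected into the four corners, with middle column `R i % 2` and middle row
`S j % 2`. -/
def kleinFill {m n : ℕ} (R : Fin m → ℕ) (S : Fin n → ℕ)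
    (B : Matrix (Fin (m / 2)) (Fin (n / 2)) ℕ) : Matrix (Fin m) (Fin n) ℕ := fun i j =>
  if hi : foldIndex m i < m / 2 then
    if hj : foldIndex n j < n / 2 then B ⟨_, hi⟩ ⟨_, hj⟩ else R i % 2
  else S j % 2

section KleinFill

variable {m n : ℕ} {R : Fin m → ℕ} {S : Fin n → ℕ} {B : Matrix (Fin (m / 2)) (Fin (n / 2)) ℕ}

theorem kleinFill_eq_zero_or_one (hB : ∀ a b, B a b = 0 ∨ B a b = 1) (i : Fin m) (j : Fin n) :
    kleinFill R S B i j = 0 ∨ kleinFill R S B i j = 1 := by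
  unfold kleinFill
  split_ifs
  exacts [hB _ _, by omega, by omega]

theorem kleinFill_apply_rev_right (hS : ∀ j, S j = S j.rev) (i : Fin m) (j : Fin n) :
    kleinFill R S B i j = kleinFill R S B i j.rev := by
  simp only [kleinFill, foldIndex_rev, ← hS]

theorem kleinFill_apply_rev_left (hR : ∀ i, R i = R i.rev) (i : Fin m) (j : Fin n) :
    kleinFill R S B i j = kleinFill R S B i.rev j := by
  simp only [kleinFill, foldIndex_rev, ← hR]

theorem transpose_kleinFill
    (hc : ∀ (hm : m % 2 = 1) (hn : n % 2 = 1),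
      R ⟨m / 2, half_lt_of_mod_two_eq_one hm⟩ % 2 = S ⟨n / 2, half_lt_of_mod_two_eq_one hn⟩ % 2) :
    (kleinFill R S B)ᵀ = kleinFill S R Bᵀ := by
  ext j i
  simp only [Matrix.transpose_apply, kleinFill]
  split_ifs with hi hj hj <;> try rfl
  obtain ⟨hm, hi⟩ := eq_half_of_half_le_foldIndex (not_lt.1 hi)
  obtain ⟨hn, hj⟩ := eq_half_of_half_le_foldIndex (not_lt.1 hj)
  rw [show i = ⟨m / 2, half_lt_of_mod_two_eq_one hm⟩ from Fin.ext hi,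
    show j = ⟨n / 2, half_lt_of_mod_two_eq_one hn⟩ from Fin.ext hj]
  exact (hc hm hn).symm

theorem sum_kleinFill_row (hR : ∀ i, R i = R i.rev) (hReven : n % 2 = 0 → ∀ i, R i % 2 = 0)
    (hmid : ∀ hm : m % 2 = 1, #{j | S j % 2 = 1} = R ⟨m / 2, half_lt_of_mod_two_eq_one hm⟩)
    (hB : ∀ a, ∑ b, B a b = R (a.castLE (Nat.div_le_self m 2)) / 2) (i : Fin m) :
    ∑ j, kleinFill R S B i j = R i := by
  by_cases hi : foldIndex m i < m / 2
  · let g (b : ℕ) : ℕ := if hb : b < n / 2 then B ⟨_, hi⟩ ⟨b, hb⟩ else R i % 2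
    have hrow (j : Fin n) : kleinFill R S B i j = g (foldIndex n j) := dif_pos hi
    have hRi : R ((⟨_, hi⟩ : Fin (m / 2)).castLE (Nat.div_le_self m 2)) = R i :=
      apply_foldIndex hR i
    rw [sum_congr rfl fun j _ => hrow j, sum_comp_foldIndex, sum_range]
    simp only [g, Fin.is_lt, lt_irrefl, ↓reduceDIte, Fin.eta]
    rw [hB, hRi, smul_eq_mul, smul_eq_mul]
    rcases Nat.mod_two_eq_zero_or_one n with hn | hn <;> rw [hn]
    · have := hReven hn i
      omega
    · omega
  · obtain ⟨hm, hmid_i⟩ := eq_half_of_half_le_foldIndex (not_lt.1 hi)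
    simp only [kleinFill, dif_neg hi]
    rw [← card_filter_mod_two_eq_one, hmid hm]
    exact congrArg R (Fin.ext hmid_i.symm)

end KleinFill

theorem majorizedBy_of_symmetric_zeroOne {m n : ℕ} {A : Matrix (Fin m) (Fin n) ℕ}
    {R : Fin m → ℕ} {S : Fin n → ℕ} (h01 : ∀ i j, A i j = 0 ∨ A i j = 1)
    (hrow : ∀ i, ∑ j, A i j = R i) (hcol : ∀ j, ∑ i, A i j = S j)
    (hrowPal : ∀ i j, A i j = A i j.rev) (hcolPal : ∀ i j, A i j = A i.rev j) :
    MajorizedBy (vecMS fun j : Fin (n / 2) => S (j.castLE (Nat.div_le_self n 2)) / 2)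
      (conjMS (vecMS fun i : Fin (m / 2) => R (i.castLE (Nat.div_le_self m 2)) / 2)) := by
  have hA (i : Fin m) (j : Fin n) : A i j ≤ 1 := by rcases h01 i j with h | h <;> omega
  refine (gale_ryser _ _).2 ⟨fun a b => A (a.castLE (Nat.div_le_self m 2))
    (b.castLE (Nat.div_le_self n 2)), fun a b => h01 _ _, fun a => ?_, fun b => ?_⟩
  · rw [← hrow]
    exact (sum_div_two_of_palindrome (hrowPal _) (hA _)).symm
  · rw [← hcol]
    exact (sum_div_two_of_palindrome (fun i => hcolPal i _) (fun i => hA i _)).symm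

theorem exists_symmetric_zeroOne {m n : ℕ} {R : Fin m → ℕ} {S : Fin n → ℕ}
    (hSpal : ∀ j, S j = S j.rev) (hRpal : ∀ i, R i = R i.rev)
    (hReven : n % 2 = 0 → ∀ i, R i % 2 = 0) (hSeven : m % 2 = 0 → ∀ j, S j % 2 = 0)
    (hRodd : ∀ hn : n % 2 = 1,
      #{i | R i % 2 = 1} = S ⟨n / 2, half_lt_of_mod_two_eq_one hn⟩)
    (hSodd : ∀ hm : m % 2 = 1,
      #{j | S j % 2 = 1} = R ⟨m / 2, half_lt_of_mod_two_eq_one hm⟩)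
    (hmaj : MajorizedBy (vecMS fun j : Fin (n / 2) => S (j.castLE (Nat.div_le_self n 2)) / 2)
      (conjMS (vecMS fun i : Fin (m / 2) => R (i.castLE (Nat.div_le_self m 2)) / 2))) :
    ∃ A : Matrix (Fin m) (Fin n) ℕ, (∀ i j, A i j = 0 ∨ A i j = 1) ∧ (∀ i, ∑ j, A i j = R i) ∧
      (∀ j, ∑ i, A i j = S j) ∧ (∀ i j, A i j = A i j.rev) ∧ ∀ i j, A i j = A i.rev j := by
  obtain ⟨B, hB01, hBrow, hBcol⟩ := (gale_ryser _ _).1 hmaj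
  have hcenter (hm : m % 2 = 1) (hn : n % 2 = 1) : R ⟨m / 2, half_lt_of_mod_two_eq_one hm⟩ % 2
      = S ⟨n / 2, half_lt_of_mod_two_eq_one hn⟩ % 2 := by
    rw [← hRodd hn, card_filter_mod_two_mod_two_of_palindrome hRpal hm]
  refine ⟨kleinFill R S B, kleinFill_eq_zero_or_one hB01,
    sum_kleinFill_row hRpal hReven hSodd hBrow, fun j => ?_, kleinFill_apply_rev_right hSpal,
    kleinFill_apply_rev_left hRpal⟩
  have hcol := sum_kleinFill_row (B := Bᵀ) hSpal hSeven hRodd hBcol j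
  rw [← transpose_kleinFill hcenter] at hcol
  exact hcol

/-- **(0,1)-matrices with the Klein four-group symmetry `D_+`.**
`𝒜^+(R,S) ≠ ∅` iff (a) `R` and `S` are palindromic, (b) the parity conditions
from the `r_∞` and `r_0` cases hold, (c) if `n` is odd then `o(R) = s_{⌈n/2⌉}`
and if `m` is odd then `o(S) = r_{⌈m/2⌉}`, and (d) `S̆ ⪯ R̆*`, where
`R̆ = (⌊r_1/2⌋,…,⌊r_{⌊m/2⌋}/2⌋)` and `S̆ = (⌊s_1/2⌋,…,⌊s_{⌊n/2⌋}/2⌋)`. -/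
theorem klein_axes_zeroOne (m n : ℕ) (R : Fin m → ℕ) (S : Fin n → ℕ) :
    (∃ A : Matrix (Fin m) (Fin n) ℕ,
        (∀ i j, A i j = 0 ∨ A i j = 1) ∧
        (∀ i, ∑ j, A i j = R i) ∧
        (∀ j, ∑ i, A i j = S j) ∧
        (∀ i j, A i j = A i j.rev) ∧
        (∀ i j, A i j = A i.rev j)) ↔
      ((∀ j, S j = S j.rev) ∧ (∀ i, R i = R i.rev) ∧
        (n % 2 = 0 → ∀ i, R i % 2 = 0) ∧
        (∀ hn : n % 2 = 1,
          (Finset.univ.filter fun i => R i % 2 = 1).card ≤ S ⟨n / 2, by omega⟩) ∧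
        (m % 2 = 0 → ∀ j, S j % 2 = 0) ∧
        (∀ hm : m % 2 = 1,
          (Finset.univ.filter fun j => S j % 2 = 1).card ≤ R ⟨m / 2, by omega⟩) ∧
        (∀ hn : n % 2 = 1,
          (Finset.univ.filter fun i => R i % 2 = 1).card = S ⟨n / 2, by omega⟩) ∧
        (∀ hm : m % 2 = 1,
          (Finset.univ.filter fun j => S j % 2 = 1).card = R ⟨m / 2, by omega⟩) ∧
        MajorizedBy
          (vecMS (fun j : Fin (n / 2) => S ⟨j.val, by have := j.isLt; omega⟩ / 2))
          (conjMS (vecMS (fun i : Fin (m / 2) => R ⟨i.val, by have := i.isLt; omega⟩ / 2)))) := by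
  constructor
  · rintro ⟨A, h01, hrow, hcol, hrowPal, hcolPal⟩
    have hA (i : Fin m) (j : Fin n) : A i j ≤ 1 := by rcases h01 i j with h | h <;> omega
    have hRodd (hn : n % 2 = 1) :
        #{i | R i % 2 = 1} = S ⟨n / 2, half_lt_of_mod_two_eq_one hn⟩ := by
      simpa only [hrow, hcol] using card_filter_rowSum_odd hA hrowPal hn
    have hSodd (hm : m % 2 = 1) :
        #{j | S j % 2 = 1} = R ⟨m / 2, half_lt_of_mod_two_eq_one hm⟩ := by
      simpa only [Matrix.transpose_apply, hrow, hcol] using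
        card_filter_rowSum_odd (A := Aᵀ) (fun j i => hA i j) (fun j i => hcolPal i j) hm
    refine ⟨fun j => ?_, fun i => ?_, fun hn i => ?_, fun hn => (hRodd hn).le, fun hm j => ?_,
      fun hm => (hSodd hm).le, hRodd, hSodd,
      majorizedBy_of_symmetric_zeroOne h01 hrow hcol hrowPal hcolPal⟩
    · rw [← hcol, ← hcol]
      exact sum_congr rfl fun i _ => hrowPal i j
    · rw [← hrow, ← hrow]
      exact sum_congr rfl fun j _ => hcolPal i j
    · rw [← hrow]
      exact sum_mod_two_of_palindrome_of_even (hrowPal i) hn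
    · rw [← hcol]
      exact sum_mod_two_of_palindrome_of_even (fun i => hcolPal i j) hm
  · rintro ⟨hSpal, hRpal, hReven, -, hSeven, -, hRodd, hSodd, hmaj⟩
    exact exists_symmetric_zeroOne hSpal hRpal hReven hSeven hRodd hSodd hmaj
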